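/- arXiv:2110.12604 — 2 statements merged into one kernel-verified Lean document; each statement's English description precedes it below -/
import Mathlib

section
/- Let U ∈ C²([−h,0]) with U' > 0, let k ∈ ℝ, and let c ∈ ℝ \ U((−h,0)) (i.e., c is real and not in the open range of U on (−h,0)). Suppose y : [x₂ₗ, x₂ᵣ] → ℝ is a C² solution of (U−c)(−y'' + k²y) + U''y = 0 on an interval I = (x₂ₗ, x₂ᵣ) ⊂ [−h,0] with c ∉ U(I), and suppose y(x₂₀) = 0, y'(x₂₀) ≠ 0 at some endpoint x₂₀ of the closed interval with U(x₂₀) ≠ c. Then y(x₂) ≠ 0 for every x₂ in the closed interval other than x₂₀. -/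
/-!
With `ξ = y / (U - c)` the equation reads `((U - c)² ξ')' = k² (U - c)² ξ`, so the flux
`w = (U - c)² ξ' ξ` has derivative `(U - c)² (ξ'² + k² ξ²) ≥ 0` wherever `U ≠ c`. If `y` vanished
at `x₂₀` and at a second point `b`, then `w` would be monotone between them, vanish at `x₂₀` and
tend to `0` at `b` (also when `U b = c`: there `ξ → y'(b) / U'(b)` stays bounded while `y → 0`).
Hence `w ≡ 0`, so its derivative vanishes too, and by continuity `y'(x₂₀)² = 0`. The right endpoint
reduces to the left one by the reflection `x ↦ x₂₀ + b - x`, which preserves the equation.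
-/

open Set Filter Topology

lemma deriv_deriv_comp_const_sub {𝕜 F : Type*} [NontriviallyNormedField 𝕜] [NormedAddCommGroup F]
    [NormedSpace 𝕜 F] (f : 𝕜 → F) (r x : 𝕜) :
    deriv (deriv fun x ↦ f (r - x)) x = deriv (deriv f) (r - x) := by
  rw [funext (deriv_comp_const_sub f r), deriv.fun_neg, deriv_comp_const_sub, neg_neg]

namespace Rayleigh

def SolvesOn (U : ℝ → ℝ) (c k : ℝ) (y : ℝ → ℝ) (s : Set ℝ) : Prop :=
  ∀ x ∈ s, (U x - c) * (-(deriv (deriv y) x) + k ^ 2 * y x) + deriv (deriv U) x * y x = 0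

variable {U y : ℝ → ℝ} {c k a b x : ℝ} {s : Set ℝ}

lemma SolvesOn.mono {t : Set ℝ} (hsol : SolvesOn U c k y s) (hts : t ⊆ s) : SolvesOn U c k y t :=
  fun x hx ↦ hsol x (hts hx)

lemma SolvesOn.comp_const_sub (hsol : SolvesOn U c k y s) (r : ℝ) :
    SolvesOn (fun x ↦ U (r - x)) c k (fun x ↦ y (r - x)) ((r - ·) ⁻¹' s) := by
  intro x hx
  simpa only [deriv_deriv_comp_const_sub] using hsol (r - x) hx

/-- With `ξ = y / (U - c)`, `flux = (U - c)² ξ' ξ` and `energy = (U - c)² (ξ'² + k² ξ²)`. -/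
noncomputable def flux (U : ℝ → ℝ) (c : ℝ) (y : ℝ → ℝ) (x : ℝ) : ℝ :=
  y x * (deriv y x - deriv U x * (y x / (U x - c)))

noncomputable def energy (U : ℝ → ℝ) (c k : ℝ) (y : ℝ → ℝ) (x : ℝ) : ℝ :=
  k ^ 2 * y x ^ 2 + (deriv y x - deriv U x * (y x / (U x - c))) ^ 2

lemma energy_nonneg : 0 ≤ energy U c k y x := by
  unfold energy; positivity

lemma hasDerivAt_flux (hU : ContDiff ℝ 2 U) (hy : ContDiff ℝ 2 y) (hsol : SolvesOn U c k y s)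
    (hxs : x ∈ s) (hx : U x ≠ c) : HasDerivAt (flux U c y) (energy U c k y x) x := by
  have hxc : U x - c ≠ 0 := sub_ne_zero.mpr hx
  have hy' := (hy.differentiable two_ne_zero x).hasDerivAt
  have hy'' := (hy.differentiable_deriv_two x).hasDerivAt
  have hU' := (hU.differentiable two_ne_zero x).hasDerivAt
  have hU'' := (hU.differentiable_deriv_two x).hasDerivAt
  have hode := hsol x hxs
  refine (hy'.fun_mul (hy''.fun_sub (hU''.fun_mul (hy'.fun_div (hU'.sub_const c) hxc))))
    |>.congr_deriv ?_
  unfold energy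
  field_simp
  linear_combination (-(y x) * (U x - c)) * hode

lemma continuousAt_flux (hU : ContDiff ℝ 2 U) (hy : ContDiff ℝ 2 y) (hx : U x ≠ c) :
    ContinuousAt (flux U c y) x := by
  have := hU.continuous
  have := hy.continuous
  have := hU.continuous_deriv one_le_two
  have := hy.continuous_deriv one_le_two
  unfold flux
  fun_prop (disch := exact sub_ne_zero.mpr hx)

lemma continuousAt_energy (hU : ContDiff ℝ 2 U) (hy : ContDiff ℝ 2 y) (hx : U x ≠ c) :
    ContinuousAt (energy U c k y) x := by
  have := hU.continuous
  have := hy.continuous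
  have := hU.continuous_deriv one_le_two
  have := hy.continuous_deriv one_le_two
  unfold energy
  fun_prop (disch := exact sub_ne_zero.mpr hx)

lemma monotoneOn_flux (hU : ContDiff ℝ 2 U) (hy : ContDiff ℝ 2 y)
    (hsol : SolvesOn U c k y (Ioo a b)) (hUc : ∀ x ∈ Ico a b, U x ≠ c) :
    MonotoneOn (flux U c y) (Ico a b) := by
  have hderiv : ∀ x ∈ interior (Ico a b), HasDerivAt (flux U c y) (energy U c k y x) x := by
    rw [interior_Ico]
    exact fun x hx ↦ hasDerivAt_flux hU hy hsol hx (hUc x (Ioo_subset_Ico_self hx))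
  refine monotoneOn_of_deriv_nonneg (convex_Ico a b)
    (fun x hx ↦ (continuousAt_flux hU hy (hUc x hx)).continuousWithinAt)
    (fun x hx ↦ (hderiv x hx).differentiableAt.differentiableWithinAt)
    (fun x hx ↦ (hderiv x hx).deriv ▸ energy_nonneg)

lemma exists_tendsto_div_nhdsNE (hU : DifferentiableAt ℝ U b) (hy : DifferentiableAt ℝ y b)
    (hyb : y b = 0) (hUb : deriv U b ≠ 0) :
    ∃ L, Tendsto (fun x ↦ y x / (U x - c)) (𝓝[≠] b) (𝓝 L) := by
  by_cases hUbc : U b = c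
  · refine ⟨deriv y b / deriv U b, ?_⟩
    have hslope := (hasDerivAt_iff_tendsto_slope.mp hy.hasDerivAt).div
      (hasDerivAt_iff_tendsto_slope.mp hU.hasDerivAt) hUb
    refine hslope.congr' (eventually_nhdsWithin_of_forall fun x (hx : x ≠ b) ↦ ?_)
    rw [Pi.div_apply, slope_def_field, slope_def_field, hyb, hUbc, sub_zero,
      div_div_div_cancel_right₀ (sub_ne_zero.mpr hx)]
  · exact ⟨_, ((hy.continuousAt.div (hU.continuousAt.sub continuousAt_const)
      (sub_ne_zero.mpr hUbc)).tendsto).mono_left nhdsWithin_le_nhds⟩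

lemma tendsto_flux_nhdsLT (hU : ContDiff ℝ 2 U) (hy : ContDiff ℝ 2 y)
    (hyb : y b = 0) (hUb : deriv U b ≠ 0) : Tendsto (flux U c y) (𝓝[<] b) (𝓝 0) := by
  obtain ⟨L, hL⟩ := exists_tendsto_div_nhdsNE (c := c) (hU.differentiable two_ne_zero b)
    (hy.differentiable two_ne_zero b) hyb hUb
  have hLT : 𝓝[<] b ≤ 𝓝 b := nhdsWithin_le_nhds
  have hy0 : Tendsto y (𝓝[<] b) (𝓝 0) := hyb ▸ hy.continuous.continuousAt.tendsto.mono_left hLT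
  have hy' := (hy.continuous_deriv one_le_two).continuousAt.tendsto.mono_left hLT
  have hU' := (hU.continuous_deriv one_le_two).continuousAt.tendsto.mono_left hLT
  have hξ := hL.mono_left (nhdsWithin_mono b fun x (hx : x < b) ↦ hx.ne)
  have := hy0.mul (hy'.sub (hU'.mul hξ))
  rwa [zero_mul] at this

lemma flux_eq_zero (hU : ContDiff ℝ 2 U) (hy : ContDiff ℝ 2 y)
    (hsol : SolvesOn U c k y (Ioo a b)) (hUc : ∀ x ∈ Ico a b, U x ≠ c)
    (hya : y a = 0) (hyb : y b = 0) (hUb : deriv U b ≠ 0) :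
    EqOn (flux U c y) 0 (Ico a b) := by
  intro x hx
  have hmono := monotoneOn_flux hU hy hsol hUc
  have hfa : flux U c y a = 0 := by simp [flux, hya]
  have hle : flux U c y x ≤ 0 :=
    ge_of_tendsto (tendsto_flux_nhdsLT hU hy hyb hUb) <| mem_of_superset (Ioo_mem_nhdsLT hx.2)
      fun t ht ↦ hmono hx ⟨hx.1.trans ht.1.le, ht.2⟩ ht.1.le
  have hge : 0 ≤ flux U c y x := hfa ▸ hmono ⟨le_rfl, hx.1.trans_lt hx.2⟩ hx hx.1
  exact le_antisymm hle hge

lemma energy_eq_zero (hU : ContDiff ℝ 2 U) (hy : ContDiff ℝ 2 y)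
    (hsol : SolvesOn U c k y (Ioo a b)) (hUc : ∀ x ∈ Ico a b, U x ≠ c)
    (hya : y a = 0) (hyb : y b = 0) (hUb : deriv U b ≠ 0) :
    EqOn (energy U c k y) 0 (Ioo a b) := by
  intro x hx
  have hflux : flux U c y =ᶠ[𝓝 x] fun _ ↦ 0 :=
    mem_of_superset (Ioo_mem_nhds hx.1 hx.2) fun t ht ↦
      flux_eq_zero hU hy hsol hUc hya hyb hUb (Ioo_subset_Ico_self ht)
  exact (hasDerivAt_flux hU hy hsol hx (hUc x (Ioo_subset_Ico_self hx))).unique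
    ((hasDerivAt_const x 0).congr_of_eventuallyEq hflux)

lemma SolvesOn.deriv_left_eq_zero (hsol : SolvesOn U c k y (Ioo a b)) (hU : ContDiff ℝ 2 U)
    (hy : ContDiff ℝ 2 y) (hab : a < b) (hUc : ∀ x ∈ Ico a b, U x ≠ c)
    (hya : y a = 0) (hyb : y b = 0) (hUb : deriv U b ≠ 0) : deriv y a = 0 := by
  have hlim : Tendsto (energy U c k y) (𝓝[>] a) (𝓝 0) :=
    tendsto_const_nhds.congr' <| mem_of_superset (Ioo_mem_nhdsGT hab) fun x hx ↦
      (energy_eq_zero hU hy hsol hUc hya hyb hUb hx).symm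
  have hea : energy U c k y a = 0 := tendsto_nhds_unique
    ((continuousAt_energy hU hy (hUc a ⟨le_rfl, hab⟩)).tendsto.mono_left nhdsWithin_le_nhds) hlim
  simpa [energy, hya] using hea

lemma SolvesOn.deriv_right_eq_zero (hsol : SolvesOn U c k y (Ioo a b)) (hU : ContDiff ℝ 2 U)
    (hy : ContDiff ℝ 2 y) (hab : a < b) (hUc : ∀ x ∈ Ioc a b, U x ≠ c)
    (hya : y a = 0) (hyb : y b = 0) (hUa : deriv U a ≠ 0) : deriv y b = 0 := by
  have hrefl : ContDiff ℝ 2 fun x : ℝ ↦ a + b - x := by fun_prop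
  have hmaps : ∀ x ∈ Ioo a b, a + b - x ∈ Ioo a b := fun x hx ↦
    ⟨by linarith [hx.2], by linarith [hx.1]⟩
  have := ((hsol.comp_const_sub (a + b)).mono hmaps).deriv_left_eq_zero (hU.comp hrefl)
    (hy.comp hrefl) hab (fun x hx ↦ hUc _ ⟨by linarith [hx.2], by linarith [hx.1]⟩)
    (by simpa using hyb) (by simpa using hya) (by simpa [deriv_comp_const_sub] using hUa)
  simpa [deriv_comp_const_sub] using this

end Rayleigh

theorem stmt3_general (h k c : ℝ) (U : ℝ → ℝ) (hU : ContDiff ℝ 2 U)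
    (hU' : ∀ x ∈ Set.Icc (-h) 0, 0 < deriv U x)
    (x2l x2r x20 : ℝ) (hl : -h ≤ x2l) (hr : x2r ≤ 0)
    (hcI : c ∉ U '' Set.Ioo x2l x2r)
    (y : ℝ → ℝ) (hy : ContDiff ℝ 2 y)
    (heq : ∀ x ∈ Set.Ioo x2l x2r,
      (U x - c) * (-(deriv (deriv y) x) + k ^ 2 * y x) + deriv (deriv U) x * y x = 0)
    (hx20 : x20 = x2l ∨ x20 = x2r)
    (hy0 : y x20 = 0) (hy1 : deriv y x20 ≠ 0) (hU20 : U x20 ≠ c) :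
    ∀ x ∈ Set.Icc x2l x2r, x ≠ x20 → y x ≠ 0 := by
  intro x hx hne hyx
  have hsol : Rayleigh.SolvesOn U c k y (Ioo x2l x2r) := heq
  have hUx : deriv U x ≠ 0 := (hU' x ⟨hl.trans hx.1, hx.2.trans hr⟩).ne'
  have hUc (t : ℝ) (ht : t ∈ Ioo x2l x2r) : U t ≠ c := fun hUt ↦ hcI ⟨t, ht, hUt⟩
  rcases hx20 with rfl | rfl
  · have hlt : x20 < x := hx.1.lt_of_ne' hne
    refine hy1 <| (hsol.mono (Ioo_subset_Ioo_right hx.2)).deriv_left_eq_zero hU hy hlt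
      (fun t ht ↦ ?_) hy0 hyx hUx
    rcases ht.1.eq_or_lt with rfl | hlt'
    · exact hU20
    · exact hUc t ⟨hlt', ht.2.trans_le hx.2⟩
  · have hlt : x < x20 := hx.2.lt_of_ne hne
    refine hy1 <| (hsol.mono (Ioo_subset_Ioo_left hx.1)).deriv_right_eq_zero hU hy hlt
      (fun t ht ↦ ?_) hyx hy0 hUx
    rcases ht.2.eq_or_lt with rfl | hlt'
    · exact hU20
    · exact hUc t ⟨hx.1.trans_lt ht.1, hlt'⟩

theorem stmt3 (h k c : ℝ) (hh : 0 < h) (U : ℝ → ℝ) (hU : ContDiff ℝ 2 U)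
    (hU' : ∀ x ∈ Set.Icc (-h) 0, 0 < deriv U x)
    (hc : c ∉ U '' Set.Ioo (-h) 0)
    (x2l x2r x20 : ℝ) (hl : -h ≤ x2l) (hr : x2r ≤ 0) (hlr : x2l < x2r)
    (hcI : c ∉ U '' Set.Ioo x2l x2r)
    (y : ℝ → ℝ) (hy : ContDiff ℝ 2 y)
    (heq : ∀ x ∈ Set.Ioo x2l x2r,
      (U x - c) * (-(deriv (deriv y) x) + k ^ 2 * y x) + deriv (deriv U) x * y x = 0)
    (hx20 : x20 = x2l ∨ x20 = x2r)
    (hy0 : y x20 = 0) (hy1 : deriv y x20 ≠ 0) (hU20 : U x20 ≠ c) :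
    ∀ x ∈ Set.Icc x2l x2r, x ≠ x20 → y x ≠ 0 :=
  stmt3_general h k c U hU hU' x2l x2r x20 hl hr hcI y hy heq hx20 hy0 hy1 hU20
end

section
/- Let U : [−h,0] → ℝ be C¹ with U' > 0, let c = c_R + i c_I ∈ ℂ with c_I ≠ 0 or c_R ∉ U([−h,0]), and suppose y ∈ C²([−h,0];ℂ) solves −y'' + (k² + U''/(U−c))y = 0 with y(−h) = 0 (and U ∈ C²). Writing z_± = y' ± |k|y, one has the monotonicity identity d/dx₂ (|z₊|² − |z₋|²) = 2|k|(|z₊|² + |z₋|²) + Re(β)|z₊ − z₋|², where β = U''/(|k|(U−c)); in particular, if Re β ≥ 0 on an interval and |z₊(x₂ₗ)| ≥ |z₋(x₂ₗ)| at its left endpoint, then |z₊(x₂)| ≥ |z₋(x₂)| throughout the interval. -/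
/-!
With z± = y' ± κ y (κ = |k|) the Rayleigh equation y'' = (κ² + V) y, V = U''/(U - c), becomes
z±' = ±κ z± + V y. Differentiating |z₊|² - |z₋|² gives 2κ(|z₊|² + |z₋|²) + 2 Re(V y · conj(z₊ - z₋)),
and since z₊ - z₋ = 2κ y the last term is 4κ Re V |y|² = Re(V/κ) |z₊ - z₋|². Both terms are
nonnegative where Re(V/κ) ≥ 0, so |z₊|² - |z₋|² is nondecreasing there.
-/

open Complex Set

lemma riccati_inner_identity (κ : ℝ) (y y' V : ℂ) :
    2 * inner ℝ (y' + κ * y) (κ * (y' + κ * y) + V * y) -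
        2 * inner ℝ (y' - κ * y) (-κ * (y' - κ * y) + V * y) =
      2 * κ * (‖y' + κ * y‖ ^ 2 + ‖y' - κ * y‖ ^ 2) +
        (V / κ).re * ‖(y' + κ * y) - (y' - κ * y)‖ ^ 2 := by
  simp only [Complex.inner, Complex.sq_norm, normSq_apply, div_ofReal_re, mul_re, mul_im, add_re, add_im,
    sub_re, sub_im, neg_re, neg_im, conj_re, conj_im, ofReal_re, ofReal_im]
  rcases eq_or_ne κ 0 with rfl | hκ
  · simp
  · field_simp
    ring

lemma hasDerivAt_norm_sq_add_sub_norm_sq_sub {y y' : ℝ → ℂ} {y'' V : ℂ} {κ x : ℝ}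
    (hy : HasDerivAt y (y' x) x) (hy' : HasDerivAt y' y'' x) (heq : y'' = (κ ^ 2 + V) * y x) :
    HasDerivAt (fun s => ‖y' s + κ * y s‖ ^ 2 - ‖y' s - κ * y s‖ ^ 2)
      (2 * κ * (‖y' x + κ * y x‖ ^ 2 + ‖y' x - κ * y x‖ ^ 2) +
        (V / κ).re * ‖(y' x + κ * y x) - (y' x - κ * y x)‖ ^ 2) x := by
  have hplus : HasDerivAt (fun s => y' s + κ * y s) (κ * (y' x + κ * y x) + V * y x) x := by
    refine (hy'.add (hy.const_mul (κ : ℂ))).congr_deriv ?_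
    rw [heq]; ring
  have hminus : HasDerivAt (fun s => y' s - κ * y s) (-κ * (y' x - κ * y x) + V * y x) x := by
    refine (hy'.sub (hy.const_mul (κ : ℂ))).congr_deriv ?_
    rw [heq]; ring
  rw [← riccati_inner_identity]
  exact hplus.norm_sq.sub hminus.norm_sq

lemma nonneg_of_hasDerivAt_nonneg_of_left_nonneg {F F' : ℝ → ℝ} {a b x : ℝ}
    (hF : ∀ s ∈ Icc a b, HasDerivAt F (F' s) s) (hF' : ∀ s ∈ Icc a b, 0 ≤ F' s) (ha : 0 ≤ F a)
    (hx : x ∈ Icc a b) : 0 ≤ F x := by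
  have hmono : MonotoneOn F (Icc a b) :=
    monotoneOn_of_hasDerivWithinAt_nonneg (convex_Icc a b)
      (fun s hs => (hF s hs).continuousAt.continuousWithinAt)
      (fun s hs => (hF s (interior_subset hs)).hasDerivWithinAt)
      (fun s hs => hF' s (interior_subset hs))
  exact ha.trans (hmono (left_mem_Icc.2 (hx.1.trans hx.2)) hx hx.1)

theorem stmt17_general (h k : ℝ) (c : ℂ) (U : ℝ → ℝ)
    (y : ℝ → ℂ) (hy : ContDiff ℝ 2 y)
    (heq : ∀ x ∈ Set.Icc (-h) 0,
      -(deriv (deriv y) x) +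
        ((k ^ 2 : ℂ) + ((deriv (deriv U) x : ℝ) : ℂ) / ((U x : ℂ) - c)) * y x = 0) :
    (∀ x ∈ Set.Icc (-h) 0,
      deriv (fun s => ‖deriv y s + ((|k| : ℝ) : ℂ) * y s‖ ^ 2 - ‖deriv y s - ((|k| : ℝ) : ℂ) * y s‖ ^ 2) x =
        2 * |k| * (‖deriv y x + ((|k| : ℝ) : ℂ) * y x‖ ^ 2 + ‖deriv y x - ((|k| : ℝ) : ℂ) * y x‖ ^ 2) +
          (((deriv (deriv U) x : ℝ) : ℂ) / (((|k| : ℝ) : ℂ) * ((U x : ℂ) - c))).re *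
            ‖(deriv y x + ((|k| : ℝ) : ℂ) * y x) - (deriv y x - ((|k| : ℝ) : ℂ) * y x)‖ ^ 2) ∧
    (∀ x2l x2r : ℝ, -h ≤ x2l → x2l ≤ x2r → x2r ≤ 0 →
      (∀ x ∈ Set.Icc x2l x2r,
        0 ≤ (((deriv (deriv U) x : ℝ) : ℂ) / (((|k| : ℝ) : ℂ) * ((U x : ℂ) - c))).re) →
      ‖deriv y x2l - ((|k| : ℝ) : ℂ) * y x2l‖ ≤ ‖deriv y x2l + ((|k| : ℝ) : ℂ) * y x2l‖ →
      ∀ x ∈ Set.Icc x2l x2r,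
        ‖deriv y x - ((|k| : ℝ) : ℂ) * y x‖ ≤ ‖deriv y x + ((|k| : ℝ) : ℂ) * y x‖) := by
  have hy1 : Differentiable ℝ y := hy.differentiable two_ne_zero
  have hy2 : Differentiable ℝ (deriv y) := hy.differentiable_deriv_two
  have hF : ∀ x ∈ Icc (-h) 0, HasDerivAt
      (fun s => ‖deriv y s + ((|k| : ℝ) : ℂ) * y s‖ ^ 2 - ‖deriv y s - ((|k| : ℝ) : ℂ) * y s‖ ^ 2)
      (2 * |k| * (‖deriv y x + ((|k| : ℝ) : ℂ) * y x‖ ^ 2 + ‖deriv y x - ((|k| : ℝ) : ℂ) * y x‖ ^ 2) +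
        (((deriv (deriv U) x : ℝ) : ℂ) / (((|k| : ℝ) : ℂ) * ((U x : ℂ) - c))).re *
          ‖(deriv y x + ((|k| : ℝ) : ℂ) * y x) - (deriv y x - ((|k| : ℝ) : ℂ) * y x)‖ ^ 2) x := by
    intro x hx
    rw [div_mul_eq_div_div_swap]
    refine hasDerivAt_norm_sq_add_sub_norm_sq_sub (hy1 x).hasDerivAt (hy2 x).hasDerivAt ?_
    rw [← ofReal_pow, sq_abs, ofReal_pow]
    linear_combination -heq x hx
  refine ⟨fun x hx => (hF x hx).deriv, ?_⟩
  intro x2l x2r hl hlr hr hβ hinit x hx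
  have hsub : Icc x2l x2r ⊆ Icc (-h) 0 := Icc_subset_Icc hl hr
  have hdiff := nonneg_of_hasDerivAt_nonneg_of_left_nonneg (fun s hs => hF s (hsub hs))
    (fun s hs => add_nonneg (by positivity) (mul_nonneg (hβ s hs) (by positivity)))
    (sub_nonneg.2 (pow_le_pow_left₀ (norm_nonneg _) hinit 2)) hx
  exact (pow_le_pow_iff_left₀ (norm_nonneg _) (norm_nonneg _) two_ne_zero).1 (sub_nonneg.1 hdiff)

theorem stmt17 (h k : ℝ) (c : ℂ) (hh : 0 < h) (U : ℝ → ℝ) (hU : ContDiff ℝ 2 U)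
    (hU' : ∀ x ∈ Set.Icc (-h) 0, 0 < deriv U x)
    (hc : c.im ≠ 0 ∨ c.re ∉ U '' Set.Icc (-h) 0)
    (y : ℝ → ℂ) (hy : ContDiff ℝ 2 y) (hybc : y (-h) = 0)
    (heq : ∀ x ∈ Set.Icc (-h) 0,
      -(deriv (deriv y) x) +
        ((k ^ 2 : ℂ) + ((deriv (deriv U) x : ℝ) : ℂ) / ((U x : ℂ) - c)) * y x = 0) :
    (∀ x ∈ Set.Icc (-h) 0,
      deriv (fun s => ‖deriv y s + ((|k| : ℝ) : ℂ) * y s‖ ^ 2 - ‖deriv y s - ((|k| : ℝ) : ℂ) * y s‖ ^ 2) x =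
        2 * |k| * (‖deriv y x + ((|k| : ℝ) : ℂ) * y x‖ ^ 2 + ‖deriv y x - ((|k| : ℝ) : ℂ) * y x‖ ^ 2) +
          (((deriv (deriv U) x : ℝ) : ℂ) / (((|k| : ℝ) : ℂ) * ((U x : ℂ) - c))).re *
            ‖(deriv y x + ((|k| : ℝ) : ℂ) * y x) - (deriv y x - ((|k| : ℝ) : ℂ) * y x)‖ ^ 2) ∧
    (∀ x2l x2r : ℝ, -h ≤ x2l → x2l ≤ x2r → x2r ≤ 0 →
      (∀ x ∈ Set.Icc x2l x2r,
        0 ≤ (((deriv (deriv U) x : ℝ) : ℂ) / (((|k| : ℝ) : ℂ) * ((U x : ℂ) - c))).re) →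
      ‖deriv y x2l - ((|k| : ℝ) : ℂ) * y x2l‖ ≤ ‖deriv y x2l + ((|k| : ℝ) : ℂ) * y x2l‖ →
      ∀ x ∈ Set.Icc x2l x2r,
        ‖deriv y x - ((|k| : ℝ) : ℂ) * y x‖ ≤ ‖deriv y x + ((|k| : ℝ) : ℂ) * y x‖) :=
  stmt17_general h k c U y hy heq
end
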